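/- Let r ∈ (0,1] and δ > 0, and let p^{(r)} be the unique zero of f^{(r)} in Δ. Then there exists η > 0 such that sup{ |y^{(r)}(t,p) − p^{(r)}| : t ≥ 0, p ∈ Δ with |p − p^{(r)}| < η } < δ; that is, any solution starting within η of p^{(r)} stays within δ of p^{(r)} for all time. -/

import Mathlib

open Finset Set Filter

/-- The L¹ distance on `ℝ^d`. -/
noncomputable def l1dist {m : ℕ} (x y : Fin m → ℝ) : ℝ := ∑ i, |x i - y i|

/-- The unit simplex in `ℝ^d`. -/
def unitSimplex (d : ℕ) : Set (Fin d → ℝ) := {x | (∀ i, 0 ≤ x i) ∧ ∑ i, x i = 1}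

/-- The vector field `f^{(r)}` with `f^{(r)}_i(p) = 2(1−r) p_i (M̃p)_i + r(1/d − p_i)`. -/
noncomputable def fvec (d : ℕ) (Mt : Matrix (Fin d) (Fin d) ℝ) (r : ℝ) :
    (Fin d → ℝ) → Fin d → ℝ :=
  fun p i => 2 * (1 - r) * p i * Mt.mulVec p i + r * (1 / (d : ℝ) - p i)


open Finset Set Filter Topology Metric
open scoped Matrix

/-!
The relative entropy `V(p) = ∑ pᵣᵢ log (pᵣᵢ / pᵢ)` is a Lyapunov function. Along a solution in the
interior of the simplex, skew-symmetry of `M̃` together with `f^{(r)}(pᵣ) = 0` gives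
`dV/dt = -(r/d) ∑ (pᵢ - pᵣᵢ)² / (pᵢ pᵣᵢ) ≤ 0`. Since `(pᵢ - pᵣᵢ)² ≤ 4 V(p)` on the simplex, the
sublevel set `{V < ε²/4}` lies in the `ε`-ball around `pᵣ`, which for small `ε` stays inside the
open simplex. A solution starting near `pᵣ`, where `V` is small by continuity, therefore cannot
reach the boundary of that ball: up to the first time it leaves the interior, `V` has not grown.
-/

lemma mapsTo_Ici_of_trapped {E : Type*} [TopologicalSpace E] {Y : ℝ → E} {K U : Set E}
    (hY : ContinuousOn Y (Ici 0)) (hK : IsClosed K) (hU : IsOpen U) (hKU : K ⊆ U)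
    (h0 : Y 0 ∈ U) (htrap : ∀ T ≥ 0, MapsTo Y (Icc 0 T) U → Y T ∈ K) :
    MapsTo Y (Ici 0) K := by
  intro t ht
  by_contra hYt
  set B := Icc 0 t ∩ Y ⁻¹' Uᶜ
  have hB : IsClosed B :=
    (hY.mono Icc_subset_Ici_self).preimage_isClosed_of_isClosed isClosed_Icc hU.isClosed_compl
  have hBne : B.Nonempty := by
    by_contra hBe
    exact hYt (htrap t ht fun s hs => by_contra fun hsU => hBe ⟨s, hs, hsU⟩)
  obtain ⟨T, ⟨hT, hTU⟩, hTmin⟩ :=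
    (isCompact_Icc.of_isClosed_subset hB inter_subset_left).exists_isLeast hBne
  have hbefore : ∀ s ∈ Ico 0 T, Y s ∈ U := fun s hs => by_contra fun hsU =>
    (hTmin ⟨⟨hs.1, hs.2.le.trans hT.2⟩, hsU⟩).not_gt hs.2
  have hT0 : 0 < T := hT.1.lt_of_ne fun h => hTU (h ▸ h0)
  -- `Y` is in `K` on `[0, T)`, hence at `T` as `K` is closed, contradicting `Y T ∉ U`
  have hK_before : Y '' Ico 0 T ⊆ K := image_subset_iff.2 fun s hs =>
    htrap s hs.1 fun u hu => hbefore u ⟨hu.1, hu.2.trans_lt hs.2⟩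
  have hYT : Y T ∈ K := by
    have hcl : T ∈ closure (Ico 0 T) := by rw [closure_Ico hT0.ne]; exact right_mem_Icc.2 hT0.le
    exact hK.closure_subset_iff.2 hK_before
      (((hY T hT.1).mono Ico_subset_Ici_self).mem_closure_image hcl)
  exact hTU (hKU hYT)

lemma dist_le_l1dist {m : ℕ} (x y : Fin m → ℝ) : dist x y ≤ l1dist x y :=
  (dist_pi_le_iff (sum_nonneg fun _ _ => abs_nonneg _)).2 fun i =>
    single_le_sum (f := fun j => |x j - y j|) (fun _ _ => abs_nonneg _) (mem_univ i)

lemma continuous_l1dist_left {m : ℕ} (y : Fin m → ℝ) : Continuous fun x => l1dist x y := by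
  unfold l1dist; fun_prop

lemma sq_sub_le_four_mul_entropy_term {a b : ℝ} (ha : 0 < a) (hb : 0 < b) (ha1 : a ≤ 1)
    (hb1 : b ≤ 1) : (b - a) ^ 2 ≤ 4 * (a * (Real.log a - Real.log b) + b - a) := by
  obtain ⟨s, hs, rfl⟩ : ∃ s > 0, s ^ 2 = a := ⟨√a, Real.sqrt_pos.2 ha, Real.sq_sqrt ha.le⟩
  obtain ⟨u, hu, rfl⟩ : ∃ u > 0, u ^ 2 = b := ⟨√b, Real.sqrt_pos.2 hb, Real.sq_sqrt hb.le⟩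
  have hlog : s * (Real.log u - Real.log s) ≤ u - s :=
    calc s * (Real.log u - Real.log s) = s * Real.log (u / s) := by
          rw [Real.log_div hu.ne' hs.ne']
      _ ≤ s * (u / s - 1) := by gcongr; exact Real.log_le_sub_one_of_pos (div_pos hu hs)
      _ = u - s := by field_simp
  -- the entropy term dominates the squared Hellinger distance `(√b - √a)²`
  have hhellinger :
      (u - s) ^ 2 ≤ s ^ 2 * (Real.log (s ^ 2) - Real.log (u ^ 2)) + u ^ 2 - s ^ 2 := by
    rw [Real.log_pow, Real.log_pow]
    push_cast
    nlinarith
  have hsum : (u + s) ^ 2 ≤ 4 := by nlinarith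
  calc (u ^ 2 - s ^ 2) ^ 2 = (u - s) ^ 2 * (u + s) ^ 2 := by ring
    _ ≤ (u - s) ^ 2 * 4 := by gcongr
    _ ≤ _ := by linarith

noncomputable def relEntropy {m : ℕ} (q p : Fin m → ℝ) : ℝ :=
  ∑ i, q i * (Real.log (q i) - Real.log (p i))

section relEntropy

variable {m : ℕ} {q p : Fin m → ℝ}

@[simp]
lemma relEntropy_self (q : Fin m → ℝ) : relEntropy q q = 0 := by
  simp [relEntropy]

lemma continuousAt_relEntropy (hp : ∀ i, 0 < p i) : ContinuousAt (relEntropy q) p := by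
  refine tendsto_finsetSum _ fun i _ => ?_
  exact continuousAt_const.mul (continuousAt_const.sub
    ((continuous_apply i).continuousAt.log (hp i).ne'))

lemma hasDerivWithinAt_relEntropy_comp {Y : ℝ → Fin m → ℝ} {Y' : Fin m → ℝ} {s : Set ℝ} {t : ℝ}
    (hY : HasDerivWithinAt Y Y' s t) (hpos : ∀ i, 0 < Y t i) :
    HasDerivWithinAt (fun u => relEntropy q (Y u)) (-∑ i, q i * (Y' i / Y t i)) s t := by
  have h : HasDerivWithinAt (fun u => relEntropy q (Y u)) (∑ i, q i * -(Y' i / Y t i)) s t :=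
    HasDerivWithinAt.fun_sum fun i _ =>
    (((hasDerivWithinAt_pi.1 hY i).log (hpos i).ne').const_sub (Real.log (q i))).const_mul (q i)
  simpa only [mul_neg, sum_neg_distrib] using h

lemma relEntropy_eq_sum_add_sub (hsum : ∑ i, p i = ∑ i, q i) :
    relEntropy q p = ∑ i, (q i * (Real.log (q i) - Real.log (p i)) + p i - q i) := by
  simp only [relEntropy, add_sub_assoc, sum_add_distrib, sum_sub_distrib, hsum, sub_self, add_zero]

lemma sq_sub_le_four_mul_relEntropy (hq : q ∈ unitSimplex m) (hp : p ∈ unitSimplex m)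
    (hqpos : ∀ i, 0 < q i) (hppos : ∀ i, 0 < p i) (j : Fin m) :
    (p j - q j) ^ 2 ≤ 4 * relEntropy q p := by
  have hle1 : ∀ {x : Fin m → ℝ}, x ∈ unitSimplex m → ∀ i, x i ≤ 1 := fun hx i =>
    hx.2 ▸ single_le_sum (fun k _ => hx.1 k) (mem_univ i)
  have hterm := fun i => sq_sub_le_four_mul_entropy_term (hqpos i) (hppos i) (hle1 hq i) (hle1 hp i)
  rw [relEntropy_eq_sum_add_sub (hp.2.trans hq.2.symm)]
  calc (p j - q j) ^ 2 ≤ 4 * (q j * (Real.log (q j) - Real.log (p j)) + p j - q j) := hterm j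
    _ ≤ _ := by
      gcongr
      exact single_le_sum (f := fun i => q i * (Real.log (q i) - Real.log (p i)) + p i - q i)
        (fun i _ => by nlinarith [hterm i, sq_nonneg (p i - q i)]) (mem_univ j)

end relEntropy

lemma dotProduct_mulVec_eq_neg_of_skew {R n : Type*} [CommRing R] [Fintype n] {M : Matrix n n R}
    (hskew : ∀ i j, M j i = -M i j) (v w : n → R) :
    v ⬝ᵥ (M *ᵥ w) = -(w ⬝ᵥ (M *ᵥ v)) := by
  have hT : Mᵀ = -M := Matrix.ext fun i j => hskew i j
  rw [Matrix.dotProduct_mulVec, ← Matrix.mulVec_transpose, hT, Matrix.neg_mulVec,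
    neg_dotProduct, dotProduct_comm]

section fvec

variable {d : ℕ} {Mt : Matrix (Fin d) (Fin d) ℝ} {r : ℝ} {pr p : Fin d → ℝ}

lemma pos_of_fvec_eq_zero (hr : 0 < r) (hp : fvec d Mt r p = 0) {i : Fin d} (hpi : 0 ≤ p i) :
    0 < p i := by
  refine hpi.lt_of_ne fun h => ?_
  have hd : (0 : ℝ) < d := Nat.cast_pos.2 (Fin.pos i)
  have := congrFun hp i
  simp only [fvec, ← h, mul_zero, zero_mul, zero_add, sub_zero, Pi.zero_apply] at this
  have : 0 < r * (1 / d) := by positivity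
  linarith

lemma sum_mul_fvec_div_eq (hskew : ∀ i j, Mt j i = -Mt i j) (hprz : fvec d Mt r pr = 0)
    (hprpos : ∀ i, 0 < pr i) (hppos : ∀ i, 0 < p i) (hprs : ∑ i, pr i = 1)
    (hps : ∑ i, p i = 1) :
    ∑ i, pr i * (fvec d Mt r p i / p i) = r / d * ∑ i, (p i - pr i) ^ 2 / (p i * pr i) := by
  have hd : (d : ℝ) ≠ 0 := by
    rintro hd
    obtain rfl : d = 0 := by exact_mod_cast hd
    simp at hps
  have hfix : ∀ i, 2 * (1 - r) * (Mt *ᵥ pr) i = r - r / (d * pr i) := fun i => by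
    have h := congrFun hprz i
    simp only [fvec, Pi.zero_apply] at h
    have e : r / (d * pr i) * pr i = r / d := by field_simp [(hprpos i).ne']
    apply mul_right_cancel₀ (hprpos i).ne'
    linear_combination h + e
  have hskew' := dotProduct_mulVec_eq_neg_of_skew hskew pr p
  simp only [dotProduct] at hskew'
  calc ∑ i, pr i * (fvec d Mt r p i / p i)
      = 2 * (1 - r) * ∑ i, pr i * (Mt *ᵥ p) i + ∑ i, r * (pr i / (d * p i) - pr i) := by
        rw [mul_sum, ← sum_add_distrib]
        refine sum_congr rfl fun i _ => ?_
        have := (hppos i).ne'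
        simp only [fvec]
        field_simp
    -- skew-symmetry moves `M̃` onto `pr`, where the equation `f^{(r)}(pr) = 0` evaluates it
    _ = ∑ i, (r * (p i / (d * pr i) + pr i / (d * p i)) - r * (p i + pr i)) := by
        rw [hskew', mul_neg, mul_sum, ← sum_neg_distrib, ← sum_add_distrib]
        refine sum_congr rfl fun i _ => ?_
        rw [← mul_assoc, mul_comm _ (p i), mul_assoc, hfix]
        ring
    _ = r / d * ∑ i, (p i - pr i) ^ 2 / (p i * pr i) := by
        have hzero : ∑ i, (2 * r / d - r * (p i + pr i)) = 0 := by
          rw [sum_sub_distrib, ← mul_sum, sum_add_distrib, hps, hprs, sum_const, card_univ,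
            Fintype.card_fin, nsmul_eq_mul]
          field_simp
          ring
        rw [mul_sum, ← sub_eq_zero, ← sum_sub_distrib, ← hzero]
        refine sum_congr rfl fun i _ => ?_
        have := (hppos i).ne'
        have := (hprpos i).ne'
        field_simp
        ring

lemma sum_mul_fvec_div_nonneg (hskew : ∀ i j, Mt j i = -Mt i j) (hr : 0 ≤ r)
    (hprz : fvec d Mt r pr = 0) (hprpos : ∀ i, 0 < pr i) (hppos : ∀ i, 0 < p i)
    (hprs : ∑ i, pr i = 1) (hps : ∑ i, p i = 1) :
    0 ≤ ∑ i, pr i * (fvec d Mt r p i / p i) := by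
  rw [sum_mul_fvec_div_eq hskew hprz hprpos hppos hprs hps]
  exact mul_nonneg (div_nonneg hr d.cast_nonneg) <|
    sum_nonneg fun i _ => div_nonneg (sq_nonneg _) (mul_pos (hppos i) (hprpos i)).le

variable {Y : ℝ → Fin d → ℝ}

lemma relEntropy_antitoneOn (hskew : ∀ i j, Mt j i = -Mt i j) (hr : 0 ≤ r)
    (hpr : pr ∈ unitSimplex d) (hprz : fvec d Mt r pr = 0) (hprpos : ∀ i, 0 < pr i)
    (hYΔ : ∀ t ∈ Ici (0 : ℝ), Y t ∈ unitSimplex d)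
    (hYD : ∀ t ∈ Ici (0 : ℝ), HasDerivWithinAt Y (fvec d Mt r (Y t)) (Ici 0) t) {T : ℝ}
    (hpos : ∀ s ∈ Icc 0 T, ∀ i, 0 < Y s i) :
    AntitoneOn (fun t => relEntropy pr (Y t)) (Icc 0 T) := by
  have hV : ∀ t ∈ Icc 0 T, HasDerivWithinAt (fun u => relEntropy pr (Y u))
      (-∑ i, pr i * (fvec d Mt r (Y t) i / Y t i)) (Ici 0) t := fun t ht =>
    hasDerivWithinAt_relEntropy_comp (hYD t ht.1) (hpos t ht)
  refine antitoneOn_of_hasDerivWithinAt_nonpos (convex_Icc 0 T)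
    (f' := fun t => -∑ i, pr i * (fvec d Mt r (Y t) i / Y t i))
    (fun t ht => (hV t ht).continuousWithinAt.mono Icc_subset_Ici_self) (fun t ht => ?_)
    (fun t ht => ?_)
  · rw [interior_Icc] at ht ⊢
    exact (hV t (Ioo_subset_Icc_self ht)).mono fun s hs => hs.1.le
  · rw [interior_Icc] at ht
    exact neg_nonpos.2 <| sum_mul_fvec_div_nonneg hskew hr hprz hprpos
      (hpos t (Ioo_subset_Icc_self ht)) hpr.2 (hYΔ t ht.1.le).2

lemma mapsTo_closedBall_of_relEntropy_lt (hskew : ∀ i j, Mt j i = -Mt i j) (hr : 0 ≤ r)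
    (hpr : pr ∈ unitSimplex d) (hprz : fvec d Mt r pr = 0) (hprpos : ∀ i, 0 < pr i)
    (hYΔ : ∀ t ∈ Ici (0 : ℝ), Y t ∈ unitSimplex d)
    (hYD : ∀ t ∈ Ici (0 : ℝ), HasDerivWithinAt Y (fvec d Mt r (Y t)) (Ici 0) t)
    (hY0 : Y 0 ∈ Set.univ.pi fun _ => Set.Ioi 0) {ε : ℝ} (hε : 0 ≤ ε)
    (hεpos : closedBall pr ε ⊆ Set.univ.pi fun _ => Set.Ioi 0)
    (hV : relEntropy pr (Y 0) < ε ^ 2 / 4) :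
    MapsTo Y (Ici 0) (closedBall pr ε) := by
  refine mapsTo_Ici_of_trapped (fun t ht => (hYD t ht).continuousWithinAt) isClosed_closedBall
    (isOpen_set_pi finite_univ fun _ _ => isOpen_Ioi) hεpos hY0 fun T hT hTpos => ?_
  have hpos : ∀ s ∈ Icc 0 T, ∀ i, 0 < Y s i := fun s hs => mem_univ_pi.1 (hTpos hs)
  have hVT : relEntropy pr (Y T) < ε ^ 2 / 4 :=
    (relEntropy_antitoneOn hskew hr hpr hprz hprpos hYΔ hYD hpos (left_mem_Icc.2 hT)
      (right_mem_Icc.2 hT) hT).trans_lt hV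
  refine (dist_pi_le_iff hε).2 fun i => (abs_lt_of_sq_lt_sq ?_ hε).le
  linarith [sq_sub_le_four_mul_relEntropy hpr (hYΔ T hT) hprpos (hpos T (right_mem_Icc.2 hT)) i]

end fvec

theorem stmt7_general (d : ℕ) (Mt : Matrix (Fin d) (Fin d) ℝ)
    (hskew : ∀ i j, Mt j i = - Mt i j)
    (r : ℝ) (hr0 : 0 < r) (δ : ℝ) (hδ : 0 < δ)
    -- `pr` is the (unique) zero of `f^{(r)}` in the simplex
    (pr : Fin d → ℝ) (hpr : pr ∈ unitSimplex d) (hprz : fvec d Mt r pr = 0)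
    -- `y p₀` is the solution of `y' = f^{(r)}(y)` with `y(0) = p₀`, for each `p₀ ∈ Δ`
    (y : (Fin d → ℝ) → ℝ → Fin d → ℝ)
    (hy0 : ∀ p₀ ∈ unitSimplex d, y p₀ 0 = p₀)
    (hyΔ : ∀ p₀ ∈ unitSimplex d, ∀ t ∈ Ici (0 : ℝ), y p₀ t ∈ unitSimplex d)
    (hyD : ∀ p₀ ∈ unitSimplex d, ∀ t ∈ Ici (0 : ℝ),
      HasDerivWithinAt (y p₀) (fvec d Mt r (y p₀ t)) (Ici 0) t) :
    ∃ η > 0,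
      (⨆ t ∈ Ici (0 : ℝ),
        ⨆ p ∈ {q | q ∈ unitSimplex d ∧ l1dist q pr < η}, l1dist (y p t) pr) < δ := by
  set U : Set (Fin d → ℝ) := Set.univ.pi fun _ => Set.Ioi 0
  have hU : IsOpen U := isOpen_set_pi finite_univ fun _ _ => isOpen_Ioi
  have hprU : pr ∈ U := mem_univ_pi.2 fun i => pos_of_fvec_eq_zero hr0 hprz (hpr.1 i)
  obtain ⟨ε, hε, hεball⟩ : ∃ ε > 0, closedBall pr ε ⊆ U ∩ {p | l1dist p pr < δ / 2} :=
    nhds_basis_closedBall.mem_iff.1 <| inter_mem (hU.mem_nhds hprU) <|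
      (isOpen_lt (continuous_l1dist_left pr) continuous_const).mem_nhds
        (by simpa [l1dist] using half_pos hδ)
  obtain ⟨η, hη, hηball⟩ : ∃ η > 0, ∀ ⦃p⦄, dist p pr < η → p ∈ U ∧ relEntropy pr p < ε ^ 2 / 4 :=
    eventually_nhds_iff.1 <| (hU.eventually_mem hprU).and <|
      (continuousAt_relEntropy (mem_univ_pi.1 hprU)).eventually
        (gt_mem_nhds (by simpa using by positivity))
  refine ⟨η, hη, lt_of_le_of_lt ?_ (half_lt_self hδ)⟩
  have hδ2 : 0 ≤ δ / 2 := (half_pos hδ).le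
  refine Real.iSup_le (fun t => Real.iSup_le (fun ht => Real.iSup_le (fun p =>
    Real.iSup_le (fun hp => ?_) hδ2) hδ2) hδ2) hδ2
  obtain ⟨hp0U, hp0V⟩ := hηball ((dist_le_l1dist p pr).trans_lt hp.2)
  rw [← hy0 p hp.1] at hp0U hp0V
  exact (hεball (mapsTo_closedBall_of_relEntropy_lt hskew hr0.le hpr hprz (mem_univ_pi.1 hprU)
    (hyΔ p hp.1) (hyD p hp.1) hp0U hε.le (hεball.trans inter_subset_left) hp0V ht)).2.le

/-- For `r ∈ (0,1]` and `δ > 0` there is `η > 0` such that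
`sup{ |y^{(r)}(t,p) − p^{(r)}| : t ≥ 0, p ∈ Δ, |p − p^{(r)}| < η } < δ`. -/
theorem stmt7 (d : ℕ) (hd : 1 ≤ d) (Mt : Matrix (Fin d) (Fin d) ℝ)
    (hskew : ∀ i j, Mt j i = - Mt i j) (hbound : ∀ i j, |Mt i j| ≤ 1)
    (r : ℝ) (hr0 : 0 < r) (hr1 : r ≤ 1) (δ : ℝ) (hδ : 0 < δ)
    -- `pr` is the (unique) zero of `f^{(r)}` in the simplex
    (pr : Fin d → ℝ) (hpr : pr ∈ unitSimplex d) (hprz : fvec d Mt r pr = 0)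
    (hpruniq : ∀ q ∈ unitSimplex d, fvec d Mt r q = 0 → q = pr)
    -- `y p₀` is the solution of `y' = f^{(r)}(y)` with `y(0) = p₀`, for each `p₀ ∈ Δ`
    (y : (Fin d → ℝ) → ℝ → Fin d → ℝ)
    (hy0 : ∀ p₀ ∈ unitSimplex d, y p₀ 0 = p₀)
    (hyΔ : ∀ p₀ ∈ unitSimplex d, ∀ t ∈ Ici (0 : ℝ), y p₀ t ∈ unitSimplex d)
    (hyD : ∀ p₀ ∈ unitSimplex d, ∀ t ∈ Ici (0 : ℝ),
      HasDerivWithinAt (y p₀) (fvec d Mt r (y p₀ t)) (Ici 0) t) :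
    ∃ η > 0,
      (⨆ t ∈ Ici (0 : ℝ),
        ⨆ p ∈ {q | q ∈ unitSimplex d ∧ l1dist q pr < η}, l1dist (y p t) pr) < δ :=
  stmt7_general d Mt hskew r hr0 δ hδ pr hpr hprz y hy0 hyΔ hyD
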